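/- arXiv:2512.07766 — 2 statements merged into one kernel-verified Lean document; each statement's English description precedes it below -/
import Mathlib

section
/- Let W be the weight matrix and θ the threshold vector of a Hopfield network on n neurons. For every state s and every neuron u, the asynchronous update cannot increase the energy: E(Up(s,u)) ≤ E(s). -/
open Finset

noncomputable section

/-- The net input to neuron `u` in state `s`: `∑_{v ≠ u} W u v * s v`. -/
def netInput {n : ℕ} (W : Matrix (Fin n) (Fin n) ℝ) (s : Fin n → ℝ) (u : Fin n) : ℝ :=
  ∑ v ∈ univ.filter (fun v => v ≠ u), W u v * s v

/-- Asynchronous update of the state `s` at neuron `u`. -/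
def Up {n : ℕ} (W : Matrix (Fin n) (Fin n) ℝ) (θ : Fin n → ℝ) (s : Fin n → ℝ)
    (u : Fin n) : Fin n → ℝ :=
  Function.update s u (if θ u ≤ netInput W s u then 1 else -1)

/-- The energy of a state of a Hopfield network. -/
def energy {n : ℕ} (W : Matrix (Fin n) (Fin n) ℝ) (θ : Fin n → ℝ) (s : Fin n → ℝ) : ℝ :=
  -(1 / 2) * (∑ u, ∑ v ∈ univ.filter (fun v => v ≠ u), W u v * s u * s v)
    + ∑ u, θ u * s u

/-!
Setting neuron `u` to `x` changes the energy by `(x - s u) * (θ u - net_u(s))`: only the terms of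
row and column `u` of the quadratic part change, and by symmetry of `W` they contribute equally
(the diagonal never enters, since both the energy and the net input skip it). The update rule
chooses `x = ±1` so that `x - s u` has the sign of `net_u(s) - θ u`, making this change
nonpositive.
-/

section UpdateSums

variable {ι R : Type*} [DecidableEq ι] [CommRing R]

lemma update_mul_update_sub_mul_of_ne (s : ι → R) (u : ι) (x : R) {a v : ι} (hva : v ≠ a) :
    Function.update s u x a * Function.update s u x v - s a * s v =
      (if a = u then (x - s u) * s v else 0) + (if v = u then (x - s u) * s a else 0) := by
  by_cases ha : a = u <;> by_cases hv : v = u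
  · exact absurd (hv.trans ha.symm) hva
  all_goals simp [ha, hv]
  all_goals ring

variable [Fintype ι]

lemma sum_mul_update_sub (θ s : ι → R) (u : ι) (x : R) :
    ∑ a, θ a * Function.update s u x a - ∑ a, θ a * s a = θ u * (x - s u) := by
  rw [← sum_sub_distrib, sum_eq_single u (fun a _ ha => by simp [ha]) (by simp), ← mul_sub,
    Function.update_self]

lemma sum_offDiag_update_sub {W : Matrix ι ι R} (hW : W.IsSymm) (s : ι → R) (u : ι) (x : R) :
    ∑ a, ∑ v ∈ univ.filter (· ≠ a), W a v * Function.update s u x a * Function.update s u x v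
      - ∑ a, ∑ v ∈ univ.filter (· ≠ a), W a v * s a * s v
      = 2 * (x - s u) * ∑ v ∈ univ.filter (· ≠ u), W u v * s v := by
  have hterm : ∀ a, ∀ v ∈ univ.filter (· ≠ a),
      W a v * Function.update s u x a * Function.update s u x v - W a v * s a * s v =
        (if a = u then W u v * ((x - s u) * s v) else 0)
          + (if v = u then W a u * ((x - s u) * s a) else 0) := by
    intro a v hv
    rw [mul_assoc, mul_assoc, ← mul_sub, update_mul_update_sub_mul_of_ne s u x (mem_filter.mp hv).2]
    split_ifs <;> simp_all
  simp only [← sum_sub_distrib]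
  rw [sum_congr rfl fun a _ => sum_congr rfl (hterm a)]
  simp only [sum_add_distrib, sum_ite_irrel, sum_const_zero, sum_ite_eq', mem_filter, mem_univ,
    true_and, if_true]
  simp only [← sum_filter, ne_comm (a := u), hW.apply u]
  rw [two_mul, add_mul, mul_sum]
  congr 1 <;> exact sum_congr rfl fun v _ => by ring

end UpdateSums

lemma energy_update {n : ℕ} {W : Matrix (Fin n) (Fin n) ℝ} (hW : W.IsSymm) (θ s : Fin n → ℝ)
    (u : Fin n) (x : ℝ) :
    energy W θ (Function.update s u x) = energy W θ s + (x - s u) * (θ u - netInput W s u) := by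
  unfold energy netInput
  linear_combination (-1 / 2 : ℝ) * sum_offDiag_update_sub hW s u x + sum_mul_update_sub θ s u x

lemma ite_sub_mul_sub_nonneg {a b y : ℝ} (hy : |y| ≤ 1) :
    0 ≤ ((if a ≤ b then 1 else -1) - y) * (b - a) := by
  obtain ⟨hy₁, hy₂⟩ := abs_le.mp hy
  split_ifs
  · exact mul_nonneg (by linarith) (by linarith)
  · exact mul_nonneg_of_nonpos_of_nonpos (by linarith) (by linarith)

theorem energy_update_le_general {n : ℕ}
    (W : Matrix (Fin n) (Fin n) ℝ) (hsymm : W.IsSymm)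
    (θ : Fin n → ℝ) (s : Fin n → ℝ) (hs : ∀ u, s u = -1 ∨ s u = 1) (u : Fin n) :
    energy W θ (Up W θ s u) ≤ energy W θ s := by
  have hsu : |s u| ≤ 1 := by rcases hs u with h | h <;> simp [h]
  have hstep := ite_sub_mul_sub_nonneg (a := θ u) (b := netInput W s u) hsu
  rw [Up, energy_update hsymm]
  linarith

/-- An asynchronous update cannot increase the energy of a Hopfield network state. -/
theorem energy_update_le {n : ℕ} (hn : 2 ≤ n)
    (W : Matrix (Fin n) (Fin n) ℝ) (hsymm : W.IsSymm) (hdiag : ∀ u, W u u = 0)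
    (θ : Fin n → ℝ) (s : Fin n → ℝ) (hs : ∀ u, s u = -1 ∨ s u = 1) (u : Fin n) :
    energy W θ (Up W θ s u) ≤ energy W θ s :=
  energy_update_le_general W hsymm θ s hs u
end
end

section
/- Let W be the weight matrix and θ the threshold vector of a Hopfield network on n neurons, let s be a state, and let u be a neuron such that Up(s,u) u ≠ s u. Then either E(Up(s,u)) < E(s), or E(Up(s,u)) = E(s) and the number of neurons with activation +1 in Up(s,u) is strictly greater than in s. -/
open Finset

noncomputable section

/-- The number of neurons with activation `+1` in state `s`. -/
def pluses {n : ℕ} (s : Fin n → ℝ) : ℕ :=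
  (univ.filter (fun u => s u = 1)).card

/-!
Changing the activation of `u` from `s u` to `a` changes the energy by
`(a - s u) * (θ u - net_u(s))`: the linear term contributes `θ u * (a - s u)`, and by symmetry of
`W` the quadratic term changes by twice `(a - s u) * net_u(s)`, while the missing diagonal means no
term is quadratic in `s u`. The update rule chooses the sign of `a - s u` to make this
non-positive, and it vanishes only when `net_u(s) = θ u`, where the rule sets `u` to `+1`.
-/

theorem Finset.sum_sub_sum_eq_of_eq_off {ι M : Type*} [AddCommGroup M] {S : Finset ι}
    {f g : ι → M} {u : ι} (hu : u ∈ S) (h : ∀ v ∈ S, v ≠ u → f v = g v) :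
    ∑ v ∈ S, f v - ∑ v ∈ S, g v = f u - g u := by
  rw [← sum_sub_distrib]
  exact sum_eq_single_of_mem u hu fun v hv hvu => by rw [h v hv hvu, sub_self]

section Update

variable {n : ℕ} (W : Matrix (Fin n) (Fin n) ℝ) (θ : Fin n → ℝ) (s : Fin n → ℝ) (u : Fin n)
  (a : ℝ)

theorem energy_eq_sum_mul_netInput (t : Fin n → ℝ) :
    energy W θ t = -(1 / 2) * ∑ x, t x * netInput W t x + ∑ x, θ x * t x := by
  simp only [energy, netInput, mul_sum, mul_assoc, mul_left_comm (t _)]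

theorem netInput_update_self : netInput W (Function.update s u a) u = netInput W s u :=
  sum_congr rfl fun v hv => by rw [Function.update_of_ne (mem_filter.mp hv).2]

theorem netInput_update_sub {x : Fin n} (hx : x ≠ u) :
    netInput W (Function.update s u a) x - netInput W s x = W x u * (a - s u) := by
  rw [netInput, netInput, sum_sub_sum_eq_of_eq_off (by simpa using hx.symm)
    fun v _ hvu => by rw [Function.update_of_ne hvu], Function.update_self, mul_sub]

theorem sum_mul_netInput_update_sub (hsymm : W.IsSymm) :
    ∑ x, Function.update s u a x * netInput W (Function.update s u a) x
      - ∑ x, s x * netInput W s x = 2 * ((a - s u) * netInput W s u) := by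
  have hoff : ∑ x ∈ univ.erase u, Function.update s u a x * netInput W (Function.update s u a) x
      - ∑ x ∈ univ.erase u, s x * netInput W s x = (a - s u) * netInput W s u := by
    rw [← sum_sub_distrib, netInput, ← filter_ne', mul_sum]
    refine sum_congr rfl fun x hx => ?_
    have hxu := (mem_filter.mp hx).2
    have hWux : W u x = W x u := hsymm.apply x u
    rw [Function.update_of_ne hxu, ← mul_sub, netInput_update_sub W s u a hxu, hWux]
    ring
  rw [← add_sum_erase _ _ (mem_univ u), ← add_sum_erase _ _ (mem_univ u),
    Function.update_self, netInput_update_self]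
  linear_combination hoff

theorem energy_update_sub (hsymm : W.IsSymm) :
    energy W θ (Function.update s u a) - energy W θ s = (a - s u) * (θ u - netInput W s u) := by
  have hlin : ∑ x, θ x * Function.update s u a x - ∑ x, θ x * s x = θ u * (a - s u) := by
    rw [sum_sub_sum_eq_of_eq_off (mem_univ u) fun v _ hvu => by rw [Function.update_of_ne hvu],
      Function.update_self, mul_sub]
  rw [energy_eq_sum_mul_netInput, energy_eq_sum_mul_netInput]
  linear_combination -(1 / 2) * sum_mul_netInput_update_sub W s u a hsymm + hlin

theorem pluses_lt_pluses_update_one (hsu : s u ≠ 1) :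
    pluses s < pluses (Function.update s u 1) := by
  refine card_lt_card ((ssubset_iff_of_subset fun v hv => ?_).mpr ⟨u, ?_, ?_⟩)
  · have hv1 := (mem_filter.mp hv).2
    have hvu : v ≠ u := by rintro rfl; exact hsu hv1
    simpa [Function.update_of_ne hvu] using hv1
  · simp
  · simpa using hsu

end Update

theorem energy_lt_or_pluses_incr_general {n : ℕ}
    (W : Matrix (Fin n) (Fin n) ℝ) (hsymm : W.IsSymm)
    (θ : Fin n → ℝ) (s : Fin n → ℝ) (hs : ∀ u, s u = -1 ∨ s u = 1) (u : Fin n)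
    (hchange : Up W θ s u u ≠ s u) :
    energy W θ (Up W θ s u) < energy W θ s ∨
    (energy W θ (Up W θ s u) = energy W θ s ∧ pluses s < pluses (Up W θ s u)) := by
  have hdiff := energy_update_sub W θ s u (if θ u ≤ netInput W s u then 1 else -1) hsymm
  rcases le_or_gt (θ u) (netInput W s u) with hle | hgt
  · have hUp : Up W θ s u = Function.update s u 1 := by rw [Up, if_pos hle]
    have hsu1 : s u ≠ 1 := by simpa [hUp] using hchange.symm
    have hsu : s u = -1 := (hs u).resolve_right hsu1
    rw [if_pos hle, hsu, ← hUp] at hdiff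
    rcases hle.lt_or_eq with hlt | heq
    · left; linarith
    · exact Or.inr ⟨by linarith, hUp ▸ pluses_lt_pluses_update_one s u hsu1⟩
  · have hUp : Up W θ s u = Function.update s u (-1) := by rw [Up, if_neg hgt.not_ge]
    have hsu : s u = 1 := (hs u).resolve_left (by simpa [hUp] using hchange.symm)
    rw [if_neg hgt.not_ge, hsu, ← hUp] at hdiff
    left; linarith

/-- If an asynchronous update changes the activation of `u`, then either the energy strictly
decreases, or the energy is unchanged and the number of `+1` activations strictly increases. -/
theorem energy_lt_or_pluses_incr {n : ℕ} (hn : 2 ≤ n)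
    (W : Matrix (Fin n) (Fin n) ℝ) (hsymm : W.IsSymm) (hdiag : ∀ u, W u u = 0)
    (θ : Fin n → ℝ) (s : Fin n → ℝ) (hs : ∀ u, s u = -1 ∨ s u = 1) (u : Fin n)
    (hchange : Up W θ s u u ≠ s u) :
    energy W θ (Up W θ s u) < energy W θ s ∨
    (energy W θ (Up W θ s u) = energy W θ s ∧ pluses s < pluses (Up W θ s u)) :=
  energy_lt_or_pluses_incr_general W hsymm θ s hs u hchange
end
end
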